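/- Pathwise recursion for infection times (agent subject to external infection): assume x⁰_i = 0 for all i ∈ V. Define the earliest possible external infection time τ^ext_i := 1 + inf{k ∈ ℕ | u_i(k) = 1} ∈ ℕ ∪ {∞}. Then for every agent i ∈ V, k_i = min( τ^ext_i , inf_{j ∈ N_i} inf{k ∈ ℕ | k ≥ 1, c_{ji}(k−1) = 1, and k_j ≤ k−1 ≤ k_j + R_j} ), where all infima are taken in ℕ ∪ {∞} (inf ∅ = ∞). -/

import Mathlib

/-!
Once agent `j` is first infected, at time `k_j`, its clock `s_j` starts from zero and counts the
infected steps, so the infection lasts exactly `R_j + 1` steps: `x_j(m) = 1` iff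
`k_j ≤ m ≤ k_j + R_j`. The neighbour condition in the formula thus says that `j` is infectious at
time `k - 1` and in contact with `i`, i.e. that `i` is exposed at time `k - 1` through `j`.
Since `x⁰ = 0`, the first infection of `i`, at time `m`, is caused by an exposure (external or
through a neighbour) at some time `< m`; conversely an exposure at time `k` infects `i` by
time `k + 1`, because a still susceptible agent has `s_i = 0 < R_i`. Hence `k_i` is one plus the
first exposure time of `i`, and splitting exposures into external and neighbour ones gives the
formula.
-/

open Finset

/-- The step function `ρ : ℤ → {0,1}`, `ρ(z) = 1` iff `z > 0`. -/
def stepFn (z : ℤ) : ℕ := if 0 < z then 1 else 0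

lemma stepFn_le_one (z : ℤ) : stepFn z ≤ 1 := by
  unfold stepFn; split_ifs <;> simp

lemma stepFn_eq_one_iff {z : ℤ} : stepFn z = 1 ↔ 0 < z := by
  unfold stepFn; split_ifs <;> simp [*]

lemma stepFn_eq_zero {z : ℤ} (hz : z ≤ 0) : stepFn z = 0 := if_neg hz.not_gt

noncomputable def firstTime (p : ℕ → Prop) : ℕ∞ := sInf {n : ℕ∞ | ∃ m : ℕ, p m ∧ n = m}

section firstTime

variable {p : ℕ → Prop}

lemma firstTime_lt_iff {a : ℕ∞} : firstTime p < a ↔ ∃ m, p m ∧ (m : ℕ∞) < a := by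
  simp [firstTime, sInf_lt_iff]

lemma one_add_firstTime_lt_iff {a : ℕ∞} :
    1 + firstTime p < a ↔ ∃ m, p m ∧ ((m + 1 : ℕ) : ℕ∞) < a := by
  simp [firstTime, ENat.add_sInf, iInf_lt_iff, add_comm]

lemma firstTime_eq_find [DecidablePred p] (h : ∃ m, p m) : firstTime p = Nat.find h :=
  le_antisymm (sInf_le ⟨_, Nat.find_spec h, rfl⟩) <| le_sInf <| by
    rintro _ ⟨m, hm, rfl⟩
    exact_mod_cast Nat.find_min' h hm

lemma firstTime_eq_top (h : ¬ ∃ m, p m) : firstTime p = ⊤ := by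
  simp [firstTime, not_exists.mp h]

end firstTime

section SIR

variable {V : Type*} [Fintype V] {E : V → V → Prop} [DecidableRel E] {R : V → ℕ}
  {c : ℕ → V → V → ℕ} {u : ℕ → V → ℕ} {x s : ℕ → V → ℕ}

variable (E R c u x s) in
structure IsSIRTrajectory : Prop where
  x_succ : ∀ k i, x (k + 1) i =
    stepFn ((R i : ℤ) - (s k i : ℤ)) *
      stepFn ((x k i : ℤ) +
        (∑ j ∈ univ.filter (fun j => E j i), (c k i j : ℤ) * (x k j : ℤ)) + (u k i : ℤ))
  s_zero : ∀ i, s 0 i = 0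
  s_succ : ∀ k i, s (k + 1) i = s k i + x k i

variable (E c u x) in
def Exposed (k : ℕ) (i : V) : Prop := u k i = 1 ∨ ∃ j, E j i ∧ c k i j = 1 ∧ x k j = 1

namespace IsSIRTrajectory

theorem x_succ_eq_one_iff (h : IsSIRTrajectory E R c u x s) (k : ℕ) (i : V) :
    x (k + 1) i = 1 ↔
      s k i < R i ∧ (x k i ≠ 0 ∨ (∃ j, E j i ∧ c k i j ≠ 0 ∧ x k j ≠ 0) ∨ u k i ≠ 0) := by
  rw [h.x_succ, mul_eq_one, stepFn_eq_one_iff, stepFn_eq_one_iff, sub_pos, Nat.cast_lt]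
  refine and_congr_right' ?_
  have hcast : ((x k i : ℤ) + ∑ j ∈ univ.filter (fun j => E j i), (c k i j : ℤ) * (x k j : ℤ) + u k i)
      = ((x k i + ∑ j ∈ univ.filter (fun j => E j i), c k i j * x k j + u k i : ℕ) : ℤ) := by
    push_cast; rfl
  rw [hcast, Nat.cast_pos, Nat.pos_iff_ne_zero]
  simp only [ne_eq, Nat.add_eq_zero_iff, sum_eq_zero_iff, mem_filter, mem_univ, true_and,
    mul_eq_zero, not_and_or, not_forall, not_or, exists_prop, or_assoc]

theorem x_succ_eq_zero_of_le (h : IsSIRTrajectory E R c u x s) {k : ℕ} {i : V}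
    (hs : R i ≤ s k i) : x (k + 1) i = 0 := by
  rw [h.x_succ, stepFn_eq_zero (by omega), zero_mul]

theorem x_le_one (h : IsSIRTrajectory E R c u x s) (hx₀ : ∀ i, x 0 i ≤ 1) :
    ∀ k i, x k i ≤ 1
  | 0, i => hx₀ i
  | k + 1, i => by
    rw [h.x_succ]
    exact Left.mul_le_one (stepFn_le_one _) (stepFn_le_one _)

theorem s_eq_zero_iff (h : IsSIRTrajectory E R c u x s) (i : V) :
    ∀ k, s k i = 0 ↔ ∀ m < k, x m i = 0
  | 0 => by simp [h.s_zero]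
  | k + 1 => by rw [h.s_succ, Nat.add_eq_zero_iff, h.s_eq_zero_iff i k, Nat.forall_lt_succ_right]

theorem x_succ_eq_one_of_lt (h : IsSIRTrajectory E R c u x s) {k : ℕ} {i : V}
    (hs : s k i < R i) (hx : x k i = 1) : x (k + 1) i = 1 :=
  (h.x_succ_eq_one_iff k i).2 ⟨hs, Or.inl (by omega)⟩

theorem x_add_of_s_eq_zero (h : IsSIRTrajectory E R c u x s) {m : ℕ} {j : V}
    (hm : x m j = 1) (hs : s m j = 0) :
    ∀ t, x (m + t) j = (if t ≤ R j then 1 else 0) ∧ s (m + t) j = min t (R j + 1)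
  | 0 => by simp [hm, hs]
  | t + 1 => by
    obtain ⟨hx, hs'⟩ := h.x_add_of_s_eq_zero hm hs t
    rw [← add_assoc, h.s_succ, hs', hx]
    refine ⟨?_, by split_ifs <;> omega⟩
    rcases lt_or_ge t (R j) with ht | ht
    · rw [if_pos (show t + 1 ≤ R j by omega)]
      exact h.x_succ_eq_one_of_lt (by omega) (by rw [hx, if_pos ht.le])
    · rw [if_neg (by omega)]
      exact h.x_succ_eq_zero_of_le (by omega)

theorem x_eq_one_iff (h : IsSIRTrajectory E R c u x s) (hx₀ : ∀ i, x 0 i ≤ 1) (j : V) (m : ℕ) :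
    x m j = 1 ↔ firstTime (x · j = 1) ≤ m ∧ (m : ℕ∞) ≤ firstTime (x · j = 1) + R j := by
  classical
  by_cases hinf : ∃ m, x m j = 1
  · rw [firstTime_eq_find hinf]
    have hs : s (Nat.find hinf) j = 0 := (h.s_eq_zero_iff j _).2 fun m hm => by
      have := Nat.find_min hinf hm
      have := h.x_le_one hx₀ m j
      omega
    rcases lt_or_ge m (Nat.find hinf) with hm | hm
    · have hlt : ¬ (Nat.find hinf : ℕ∞) ≤ m := by exact_mod_cast hm.not_ge
      simp [Nat.find_min hinf hm, hlt]
    · obtain ⟨t, rfl⟩ := Nat.exists_eq_add_of_le hm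
      rw [(h.x_add_of_s_eq_zero (Nat.find_spec hinf) hs t).1]
      norm_cast
      split_ifs <;> simp <;> omega
  · rw [firstTime_eq_top hinf]
    simp [not_exists.mp hinf]

theorem exists_le_succ_x_eq_one_of_exposed (h : IsSIRTrajectory E R c u x s)
    (hx₀ : ∀ i, x 0 i ≤ 1) {k : ℕ} {i : V} (hR : 1 ≤ R i) (he : Exposed E c u x k i) :
    ∃ m ≤ k + 1, x m i = 1 := by
  by_cases hs : s k i = 0
  · refine ⟨k + 1, le_rfl, (h.x_succ_eq_one_iff k i).2 ⟨by omega, ?_⟩⟩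
    rcases he with hu | ⟨j, hj, hc, hx⟩
    · exact Or.inr (Or.inr (by omega))
    · exact Or.inr (Or.inl ⟨j, hj, by omega, by omega⟩)
  · obtain ⟨m, hm, hx⟩ : ∃ m < k, x m i ≠ 0 := by
      simpa [h.s_eq_zero_iff] using hs
    exact ⟨m, by omega, by have := h.x_le_one hx₀ m i; omega⟩

theorem exists_lt_exposed_of_x_eq_one (h : IsSIRTrajectory E R c u x s)
    (hx₀ : ∀ i, x 0 i = 0) (hc : ∀ k i j, c k i j ≤ 1) (hu : ∀ k i, u k i ≤ 1) {i : V} :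
    ∀ {m}, x m i = 1 → ∃ k < m, Exposed E c u x k i
  | 0, hm => by simp [hx₀] at hm
  | m + 1, hm => by
    have hx₁ := h.x_le_one (fun j => by simp [hx₀])
    obtain ⟨-, hxi | ⟨j, hj, hcj, hxj⟩ | hui⟩ := (h.x_succ_eq_one_iff m i).1 hm
    · obtain ⟨k, hk, he⟩ := h.exists_lt_exposed_of_x_eq_one hx₀ hc hu
        (show x m i = 1 by have := hx₁ m i; omega)
      exact ⟨k, by omega, he⟩
    · exact ⟨m, by omega, Or.inr ⟨j, hj, by have := hc m i j; omega,
        by have := hx₁ m j; omega⟩⟩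
    · exact ⟨m, by omega, Or.inl (by have := hu m i; omega)⟩

theorem firstTime_x_eq_one (h : IsSIRTrajectory E R c u x s)
    (hx₀ : ∀ i, x 0 i = 0) (hc : ∀ k i j, c k i j ≤ 1) (hu : ∀ k i, u k i ≤ 1) {i : V}
    (hR : 1 ≤ R i) :
    firstTime (x · i = 1) = 1 + firstTime (Exposed E c u x · i) := by
  refine eq_of_forall_gt_iff fun a => ?_
  rw [firstTime_lt_iff, one_add_firstTime_lt_iff]
  constructor
  · rintro ⟨m, hm, hma⟩
    obtain ⟨k, hk, he⟩ := h.exists_lt_exposed_of_x_eq_one hx₀ hc hu hm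
    exact ⟨k, he, lt_of_le_of_lt (by exact_mod_cast hk) hma⟩
  · rintro ⟨k, he, hka⟩
    obtain ⟨m, hm, hx⟩ := h.exists_le_succ_x_eq_one_of_exposed (fun j => by simp [hx₀]) hR he
    exact ⟨m, hx, lt_of_le_of_lt (by exact_mod_cast hm) hka⟩

end IsSIRTrajectory

end SIR

theorem stmt16_general {V : Type*} [Fintype V]
    (E : V → V → Prop) [DecidableRel E]
    (R : V → ℕ) (hR : ∀ i, 1 ≤ R i)
    (c : ℕ → V → V → ℕ) (hc01 : ∀ k i j, c k i j ≤ 1)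
    (hcsymm : ∀ k i j, c k i j = c k j i)
    (u : ℕ → V → ℕ) (hu01 : ∀ k i, u k i ≤ 1)
    (x0 : V → ℕ)
    (x s : ℕ → V → ℕ)
    (hx_init : ∀ i, x 0 i = x0 i)
    (hs_init : ∀ i, s 0 i = 0)
    (hx_rec : ∀ k i, x (k + 1) i =
      stepFn ((R i : ℤ) - (s k i : ℤ)) *
        stepFn ((x k i : ℤ) +
          (∑ j ∈ Finset.univ.filter (fun j => E j i), (c k i j : ℤ) * (x k j : ℤ)) +
          (u k i : ℤ)))
    (hs_rec : ∀ k i, s (k + 1) i = s k i + x k i)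
    (ki : V → ℕ∞)
    (hki : ∀ i, ki i = sInf {n : ℕ∞ | ∃ m : ℕ, x m i = 1 ∧ n = (m : ℕ∞)})
    (hx0zero : ∀ i, x0 i = 0)
    (text : V → ℕ∞)
    (htext : ∀ i, text i = 1 + sInf {n : ℕ∞ | ∃ k : ℕ, u k i = 1 ∧ n = (k : ℕ∞)}) :
    ∀ i : V,
      ki i = min (text i)
        (⨅ j ∈ Finset.univ.filter (fun j => E j i),
        sInf {n : ℕ∞ | ∃ k : ℕ, 1 ≤ k ∧ c (k - 1) j i = 1 ∧
          ki j ≤ ((k - 1 : ℕ) : ℕ∞) ∧ ((k - 1 : ℕ) : ℕ∞) ≤ ki j + (R j : ℕ∞) ∧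
          n = (k : ℕ∞)}) := by
  intro i
  have h : IsSIRTrajectory E R c u x s := ⟨hx_rec, hs_init, hs_rec⟩
  have hx₀ : ∀ j, x 0 j = 0 := fun j => (hx_init j).trans (hx0zero j)
  have hki' : ∀ j, ki j = firstTime (x · j = 1) := hki
  have hinfected : ∀ j k, x k j = 1 ↔ ki j ≤ k ∧ (k : ℕ∞) ≤ ki j + R j := fun j k => by
    rw [hki']
    exact h.x_eq_one_iff (fun j => by simp [hx₀]) j k
  refine eq_of_forall_gt_iff fun a => ?_
  rw [hki', h.firstTime_x_eq_one hx₀ hc01 hu01 (hR i), htext, min_lt_iff,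
    one_add_firstTime_lt_iff, ← firstTime, one_add_firstTime_lt_iff]
  simp only [iInf_lt_iff, sInf_lt_iff, Set.mem_ofPred_eq, mem_filter, mem_univ, true_and, Exposed]
  constructor
  · rintro ⟨k, hu | ⟨j, hj, hc, hx⟩, hk⟩
    · exact Or.inl ⟨k, hu, hk⟩
    · obtain ⟨hlo, hhi⟩ := (hinfected j k).1 hx
      refine Or.inr ⟨j, hj, _, ⟨k + 1, by omega, ?_⟩, hk⟩
      rw [Nat.add_sub_cancel, ← hcsymm]
      exact ⟨hc, hlo, hhi, rfl⟩
  · rintro (⟨k, hu, hk⟩ | ⟨j, hj, _, ⟨k, hk1, hc, hlo, hhi, rfl⟩, hk⟩)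
    · exact ⟨k, Or.inl hu, hk⟩
    · refine ⟨k - 1, Or.inr ⟨j, hj, by rwa [hcsymm], (hinfected j _).2 ⟨hlo, hhi⟩⟩, ?_⟩
      rwa [Nat.sub_add_cancel hk1]

/-- Pathwise recursion for infection times (agent subject to external infection): assuming
`x⁰ ≡ 0`, with `τ^ext_i = 1 + inf{k | u_i(k) = 1}`, every agent `i` satisfies
`k_i = min(τ^ext_i, inf_{j ∈ N_i} inf{k ≥ 1 | c_{ji}(k−1) = 1 and k_j ≤ k−1 ≤ k_j + R_j})`,
infima taken in `ℕ ∪ {∞}`. -/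
theorem stmt16 {V : Type*} [Fintype V] [DecidableEq V]
    (E : V → V → Prop) [DecidableRel E]
    (hEsymm : ∀ i j, E i j ↔ E j i) (hEirr : ∀ i, ¬ E i i)
    (R : V → ℕ) (hR : ∀ i, 1 ≤ R i)
    (c : ℕ → V → V → ℕ) (hc01 : ∀ k i j, c k i j ≤ 1)
    (hcsymm : ∀ k i j, c k i j = c k j i)
    (u : ℕ → V → ℕ) (hu01 : ∀ k i, u k i ≤ 1)
    (x0 : V → ℕ) (hx0 : ∀ i, x0 i ≤ 1)
    (x s : ℕ → V → ℕ)
    (hx_init : ∀ i, x 0 i = x0 i)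
    (hs_init : ∀ i, s 0 i = 0)
    (hx_rec : ∀ k i, x (k + 1) i =
      stepFn ((R i : ℤ) - (s k i : ℤ)) *
        stepFn ((x k i : ℤ) +
          (∑ j ∈ Finset.univ.filter (fun j => E j i), (c k i j : ℤ) * (x k j : ℤ)) +
          (u k i : ℤ)))
    (hs_rec : ∀ k i, s (k + 1) i = s k i + x k i)
    (y : ℕ → V → ℕ)
    (hy : ∀ k i, y k i = 1 - stepFn ((R i : ℤ) - (s k i : ℤ)))
    (ki : V → ℕ∞)
    (hki : ∀ i, ki i = sInf {n : ℕ∞ | ∃ m : ℕ, x m i = 1 ∧ n = (m : ℕ∞)})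
    (hx0zero : ∀ i, x0 i = 0)
    (text : V → ℕ∞)
    (htext : ∀ i, text i = 1 + sInf {n : ℕ∞ | ∃ k : ℕ, u k i = 1 ∧ n = (k : ℕ∞)}) :
    ∀ i : V,
      ki i = min (text i)
        (⨅ j ∈ Finset.univ.filter (fun j => E j i),
        sInf {n : ℕ∞ | ∃ k : ℕ, 1 ≤ k ∧ c (k - 1) j i = 1 ∧
          ki j ≤ ((k - 1 : ℕ) : ℕ∞) ∧ ((k - 1 : ℕ) : ℕ∞) ≤ ki j + (R j : ℕ∞) ∧
          n = (k : ℕ∞)}) :=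
  stmt16_general E R hR c hc01 hcsymm u hu01 x0 x s hx_init hs_init hx_rec hs_rec ki hki hx0zero
    text htext
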